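/- arXiv:math/0601186 — 2 statements merged into one kernel-verified Lean document; each statement's English description precedes it below -/
import Mathlib

section
/- Let m \u2265 1 and define the formal power series \u03c6(z) in z with polynomial coefficients in p_1,\u2026,p_m,q_1,\u2026,q_m by \u03c6(z) = \u220f_{i=1}^m [1 + p_i q_i z\u00b2 / ((1 - r_{i-1} z)(1 - (q_i + r_i) z))], where r_i = p_1 + \u22ef + p_i. Then every coefficient of \u03c6(z), as a polynomial in p_1,\u2026,p_m,q_1,\u2026,q_m, is nonnegative. -/
/-!
Polynomials with nonnegative coefficients form a subsemiring, and so do power series whose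
coefficients lie in a given subsemiring. Once the reciprocals are expanded, `φ` is built by sums
and products alone from the variables, `z`, and geometric series `∑ aⁿ zⁿ` with `a` a sum of
variables, all of which lie in these subsemirings.
-/

/-- The polynomial ring `ℤ[p_1,…,p_m,q_1,…,q_m]`. -/
abbrev PQRing (m : ℕ) : Type := MvPolynomial (Fin m ⊕ Fin m) ℤ

noncomputable def pvar {m : ℕ} (i : Fin m) : PQRing m := MvPolynomial.X (Sum.inl i)
noncomputable def qvar {m : ℕ} (i : Fin m) : PQRing m := MvPolynomial.X (Sum.inr i)

/-- `r_i = p_1 + ⋯ + p_i` (with `r_0 = 0`). -/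
noncomputable def rsum {m : ℕ} (i : ℕ) : PQRing m :=
  ∑ j : Fin m, if (j : ℕ) < i then pvar j else 0

/-- The geometric series `1/(1 - a z) = ∑_{n ≥ 0} a^n z^n`. -/
noncomputable def geom {A : Type*} [CommRing A] (a : A) : PowerSeries A :=
  PowerSeries.mk fun n => a ^ n

/-- The series `φ(z) = ∏_{i=1}^m [1 + p_i q_i z² / ((1 - r_{i-1}z)(1 - (q_i + r_i)z))]`
(0-indexed: `r_{i-1} ↦ rsum i`, `r_i ↦ rsum (i+1)`), with the reciprocals
expanded as geometric series. -/
noncomputable def phi8 (m : ℕ) : PowerSeries (PQRing m) :=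
  ∏ i : Fin m,
    (1 + PowerSeries.C (pvar i * qvar i) * PowerSeries.X ^ 2 *
      geom (rsum (i : ℕ)) * geom (qvar i + rsum ((i : ℕ) + 1)))

namespace MvPolynomial

variable {R : Type*} [CommSemiring R]

noncomputable def coeffSubsemiring (σ : Type*) (S : Subsemiring R) :
    Subsemiring (MvPolynomial σ R) where
  carrier := {p | ∀ d, p.coeff d ∈ S}
  zero_mem' _ := by simp
  one_mem' d := by
    classical
    rw [coeff_one]
    split
    · exact S.one_mem
    · exact S.zero_mem
  add_mem' hp hq d := by
    rw [coeff_add]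
    exact add_mem (hp d) (hq d)
  mul_mem' hp hq d := by
    classical
    rw [coeff_mul]
    exact sum_mem fun x _ => mul_mem (hp x.1) (hq x.2)

variable {σ : Type*} {S : Subsemiring R}

theorem mem_coeffSubsemiring {p : MvPolynomial σ R} :
    p ∈ coeffSubsemiring σ S ↔ ∀ d, p.coeff d ∈ S :=
  .rfl

theorem X_mem_coeffSubsemiring (i : σ) : X i ∈ coeffSubsemiring σ S := by
  classical
  intro d
  rw [coeff_X]
  split
  · exact S.one_mem
  · exact S.zero_mem

end MvPolynomial

namespace PowerSeries

variable {R : Type*} [Semiring R]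

noncomputable def coeffSubsemiring (S : Subsemiring R) : Subsemiring (PowerSeries R) where
  carrier := {f | ∀ n, coeff n f ∈ S}
  zero_mem' _ := by simp
  one_mem' n := by
    rw [coeff_one]
    split
    · exact S.one_mem
    · exact S.zero_mem
  add_mem' hf hg n := by
    rw [map_add]
    exact add_mem (hf n) (hg n)
  mul_mem' hf hg n := by
    rw [coeff_mul]
    exact sum_mem fun x _ => mul_mem (hf x.1) (hg x.2)

variable {S : Subsemiring R}

theorem mem_coeffSubsemiring {f : PowerSeries R} :
    f ∈ coeffSubsemiring S ↔ ∀ n, coeff n f ∈ S :=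
  .rfl

theorem C_mem_coeffSubsemiring {a : R} (ha : a ∈ S) : C a ∈ coeffSubsemiring S := by
  intro n
  rw [coeff_C]
  split
  · exact ha
  · exact S.zero_mem

theorem X_mem_coeffSubsemiring : X ∈ coeffSubsemiring S := by
  intro n
  rw [coeff_X]
  split
  · exact S.one_mem
  · exact S.zero_mem

theorem mk_mem_coeffSubsemiring {f : ℕ → R} (hf : ∀ n, f n ∈ S) :
    mk f ∈ coeffSubsemiring S := by
  intro n
  rw [coeff_mk]
  exact hf n

end PowerSeries

theorem geom_mem_coeffSubsemiring {A : Type*} [CommRing A] {S : Subsemiring A} {a : A}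
    (ha : a ∈ S) : geom a ∈ PowerSeries.coeffSubsemiring S :=
  PowerSeries.mk_mem_coeffSubsemiring fun n => pow_mem ha n

section

variable {m : ℕ}

local notation "nonnegPolys" =>
  MvPolynomial.coeffSubsemiring (Fin m ⊕ Fin m) (Subsemiring.nonneg ℤ)

theorem pvar_mem_nonneg (i : Fin m) : pvar i ∈ nonnegPolys :=
  MvPolynomial.X_mem_coeffSubsemiring _

theorem qvar_mem_nonneg (i : Fin m) : qvar i ∈ nonnegPolys :=
  MvPolynomial.X_mem_coeffSubsemiring _

theorem rsum_mem_nonneg (i : ℕ) : rsum i ∈ nonnegPolys := by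
  refine sum_mem fun j _ => ?_
  split
  · exact pvar_mem_nonneg j
  · exact zero_mem _

open PowerSeries in
theorem phi8_mem_coeffSubsemiring_nonneg :
    phi8 m ∈ coeffSubsemiring nonnegPolys := by
  refine prod_mem fun i _ => add_mem (one_mem _) (mul_mem (mul_mem (mul_mem ?_ ?_) ?_) ?_)
  · exact C_mem_coeffSubsemiring (mul_mem (pvar_mem_nonneg i) (qvar_mem_nonneg i))
  · exact pow_mem X_mem_coeffSubsemiring 2
  · exact geom_mem_coeffSubsemiring (rsum_mem_nonneg _)
  · exact geom_mem_coeffSubsemiring (add_mem (qvar_mem_nonneg i) (rsum_mem_nonneg _))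

end

theorem phi_coefficients_nonneg_general (m : ℕ) :
    ∀ n d, 0 ≤ MvPolynomial.coeff d (PowerSeries.coeff n (phi8 m)) := by
  intro n d
  have h := PowerSeries.mem_coeffSubsemiring.mp (phi8_mem_coeffSubsemiring_nonneg (m := m)) n
  exact Subsemiring.mem_nonneg.mp (MvPolynomial.mem_coeffSubsemiring.mp h d)

/-- Every coefficient of `φ(z)`, as a polynomial in the `p`'s
and `q`'s, is nonnegative. -/
theorem phi_coefficients_nonneg (m : ℕ) (hm : 1 ≤ m) :
    ∀ n d, 0 ≤ MvPolynomial.coeff d (PowerSeries.coeff n (phi8 m)) :=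
  phi_coefficients_nonneg_general m
end

section
/- Let \u03c6(z) be a formal power series with constant term 1 over a commutative \u211a-algebra, let w = w(z) satisfy w = z\u03c6(w), and define C(z) = 1/(-z\u00b2 d/dz (1/w)). Then C(z) = \u03c6(w) - w \u03c6'(w), and consequently for all k \u2265 2, [z^{k-1}] C(z) = -(1/(k-1)) [y^{k-3}] \u03c6''(y) \u03c6(y)^{k-1}. -/
/-- Composition `f(g)` of formal power series (intended for `g` with zero
constant term). -/
noncomputable def pscomp {A : Type*} [CommRing A] (f g : PowerSeries A) : PowerSeries A :=
  PowerSeries.mk fun n =>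
    ∑ j ∈ Finset.range (n + 1), PowerSeries.coeff j f * PowerSeries.coeff n (g ^ j)

/-- The formal derivative of a power series. -/
noncomputable def psderiv {A : Type*} [CommRing A] (f : PowerSeries A) : PowerSeries A :=
  PowerSeries.mk fun n => ((n : A) + 1) * PowerSeries.coeff (n + 1) f

/-!
Implicit differentiation of `w = z φ(w)` gives `w' (1 - z φ'(w)) = φ(w)`, which turns
`C z² w' = w²` into `C = φ(w) - w φ'(w)`; hence `C' = -w φ''(w) w'`. The coefficients of `H(w) w'`
are given by the Lagrange–Bürmann formula `[z^m] H(w) w' = [y^m] H(y) φ(y)^(m+1)`: write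
`H(w) = (H φ^(m+1))(w) · v^(m+1)` with `v = z / w = φ(w)⁻¹`, and use that
`[z^j] v^(j+1) w' = δ_{j0}`, because `v^(j+1) w' = v^j - z (v^j)' / j` for `j > 0`.
-/

theorem eq_one_div_smul_of_natCast_mul_eq {A : Type*} [Ring A] [Algebra ℚ A] {n : ℕ}
    (hn : n ≠ 0) {x y : A} (h : (n : A) * x = y) : x = (1 / (n : ℚ)) • y := by
  rw [← h, ← nsmul_eq_mul, ← Nat.cast_smul_eq_nsmul ℚ, smul_smul, one_div,
    inv_mul_cancel₀ (Nat.cast_ne_zero.2 hn), one_smul]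

namespace PowerSeries

variable {A : Type*} [CommRing A]

theorem psderiv_eq_derivative (f : A⟦X⟧) : psderiv f = d⁄dX A f := by
  ext n
  rw [psderiv, coeff_mk, coeff_derivative, mul_comm]

theorem coeff_mul_subst {g : A⟦X⟧} (hg : constantCoeff g = 0) (h f : A⟦X⟧) (N : ℕ) :
    coeff N (h * f.subst g) = ∑ r ∈ Finset.range (N + 1), coeff r f * coeff N (h * g ^ r) := by
  have hsub : HasSubst g := .of_constantCoeff_zero' hg
  obtain ⟨t, ht⟩ : X ^ (N + 1) ∣ f - (trunc (N + 1) f : A⟦X⟧) := by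
    refine X_pow_dvd_iff.2 fun m hm => ?_
    rw [map_sub, Polynomial.coeff_coe, coeff_trunc, if_pos hm, sub_self]
  have hsplit : f.subst g =
      g ^ (N + 1) * t.subst g + ∑ r ∈ Finset.range (N + 1), C (coeff r f) * g ^ r := by
    conv_lhs => rw [← sub_add_cancel f (trunc (N + 1) f : A⟦X⟧), ht]
    rw [subst_add hsub, subst_mul hsub, subst_pow hsub, subst_X hsub, subst_coe hsub,
      Polynomial.aeval_eq_sum_range' (natDegree_trunc_lt f N)]
    refine congrArg _ (Finset.sum_congr rfl fun r hr => ?_)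
    rw [coeff_trunc, if_pos (Finset.mem_range.1 hr), Algebra.smul_def]
    rfl
  have htail : coeff N (h * (g ^ (N + 1) * t.subst g)) = 0 := by
    obtain ⟨s, hs⟩ := pow_dvd_pow_of_dvd (X_dvd_iff.2 hg) (N + 1)
    rw [hs, mul_left_comm, mul_assoc, coeff_X_pow_mul', if_neg (by omega)]
  rw [hsplit, mul_add, map_add, htail, zero_add, Finset.mul_sum, map_sum]
  refine Finset.sum_congr rfl fun r _ => ?_
  rw [mul_left_comm, coeff_C_mul]

theorem pscomp_eq_subst {g : A⟦X⟧} (hg : constantCoeff g = 0) (f : A⟦X⟧) :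
    pscomp f g = f.subst g := by
  ext N
  simpa [pscomp] using (coeff_mul_subst hg 1 f N).symm

theorem constantCoeff_subst_of_constantCoeff_zero {g : A⟦X⟧} (hg : constantCoeff g = 0)
    (f : A⟦X⟧) : constantCoeff (f.subst g) = constantCoeff f := by
  simpa using coeff_mul_subst hg 1 f 0

theorem derivative_mul_one_sub_X_mul_subst_derivative {φ w : A⟦X⟧} (hw : w = X * φ.subst w) :
    d⁄dX A w * (1 - X * (d⁄dX A φ).subst w) = φ.subst w := by
  have hsub : HasSubst w := .of_constantCoeff_zero' (by rw [hw]; simp)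
  have hdw : d⁄dX A w = φ.subst w + X * ((d⁄dX A φ).subst w * d⁄dX A w) := by
    conv_lhs => rw [hw]
    rw [Derivation.leibniz, derivative_subst hsub, derivative_X, smul_eq_mul, smul_eq_mul,
      mul_one, add_comm]
  linear_combination hdw

theorem eq_subst_sub_mul_subst_derivative {φ w C : A⟦X⟧} (hφ : IsUnit (constantCoeff φ))
    (hw : w = X * φ.subst w) (hC : C * X ^ 2 * d⁄dX A w = w ^ 2) :
    C = φ.subst w - w * (d⁄dX A φ).subst w := by
  have hw0 : constantCoeff w = 0 := by rw [hw]; simp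
  have hdw := derivative_mul_one_sub_X_mul_subst_derivative hw
  have hdw_unit : IsUnit (d⁄dX A w) := by
    refine isUnit_of_mul_isUnit_left (y := 1 - X * (d⁄dX A φ).subst w) ?_
    rw [hdw, isUnit_iff_constantCoeff, constantCoeff_subst_of_constantCoeff_zero hw0]
    exact hφ
  have hCdw : X ^ 2 * (C * d⁄dX A w) = X ^ 2 * (φ.subst w) ^ 2 := by
    rw [← mul_pow, ← hw, ← hC]
    ring
  refine hdw_unit.mul_left_cancel ?_
  linear_combination X_pow_mul_cancel hCdw - φ.subst w * hdw
    + (d⁄dX A w * (d⁄dX A φ).subst w) * hw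

theorem derivative_subst_sub_mul_subst_derivative {φ w : A⟦X⟧} (hw : HasSubst w) :
    d⁄dX A (φ.subst w - w * (d⁄dX A φ).subst w) =
      -(w * (d⁄dX A (d⁄dX A φ)).subst w * d⁄dX A w) := by
  rw [map_sub, Derivation.leibniz, derivative_subst hw, derivative_subst hw, smul_eq_mul,
    smul_eq_mul]
  ring

theorem coeff_inv_pow_mul_derivative_X_mul [Algebra ℚ A] {u v : A⟦X⟧} (huv : u * v = 1)
    (j : ℕ) : coeff j (v ^ (j + 1) * d⁄dX A (X * u)) = if j = 0 then 1 else 0 := by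
  have hexpand : v ^ (j + 1) * d⁄dX A (X * u) = v ^ j + X * (v ^ (j + 1) * d⁄dX A u) := by
    rw [Derivation.leibniz, derivative_X, smul_eq_mul, smul_eq_mul]
    linear_combination v ^ j * huv
  rw [hexpand, map_add]
  rcases j with _ | n
  · simp
  have hdv : d⁄dX A v = -(v ^ 2 * d⁄dX A u) := by
    have h0 : u * d⁄dX A v + v * d⁄dX A u = 0 := by
      simpa [Derivation.leibniz, smul_eq_mul] using congrArg (d⁄dX A) huv
    linear_combination v * h0 - d⁄dX A v * huv
  have hdpow : d⁄dX A (v ^ (n + 1)) + ((n + 1 : ℕ) : A⟦X⟧) * (v ^ (n + 2) * d⁄dX A u) = 0 := by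
    rw [Derivation.leibniz_pow, hdv, smul_eq_mul, nsmul_eq_mul, Nat.add_sub_cancel]
    ring
  have hcoeff := congrArg (coeff n) hdpow
  rw [map_add, coeff_derivative, ← map_natCast (C (R := A)), coeff_C_mul, map_zero] at hcoeff
  rw [coeff_succ_X_mul, if_neg n.succ_ne_zero]
  exact (eq_one_div_smul_of_natCast_mul_eq n.succ_ne_zero
    (by push_cast at hcoeff ⊢; linear_combination hcoeff)).trans (smul_zero _)

theorem coeff_subst_mul_derivative [Algebra ℚ A] {φ w : A⟦X⟧}
    (hφ : IsUnit (constantCoeff φ)) (hw : w = X * φ.subst w) (H : A⟦X⟧) (m : ℕ) :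
    coeff m (H.subst w * d⁄dX A w) = coeff m (H * φ ^ (m + 1)) := by
  have hw0 : constantCoeff w = 0 := by rw [hw]; simp
  have hsub : HasSubst w := .of_constantCoeff_zero' hw0
  set u := φ.subst w
  obtain ⟨v, huv⟩ : ∃ v, u * v = 1 := (isUnit_iff_constantCoeff.2
    (by rwa [constantCoeff_subst_of_constantCoeff_zero hw0])).exists_right_inv
  have huv_pow (r : ℕ) : u ^ r * v ^ r = 1 := by rw [← mul_pow, huv, one_pow]
  have hH : H.subst w * d⁄dX A w = (H * φ ^ (m + 1)).subst w * (v ^ (m + 1) * d⁄dX A w) := by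
    rw [subst_mul hsub, subst_pow hsub]
    linear_combination (-(H.subst w * d⁄dX A w)) * huv_pow (m + 1)
  have hterm (r : ℕ) (hr : r ≤ m) :
      coeff m (v ^ (m + 1) * d⁄dX A w * w ^ r) = if r = m then 1 else 0 := by
    obtain ⟨j, rfl⟩ := Nat.exists_eq_add_of_le hr
    have hwr : w ^ r = X ^ r * u ^ r := by rw [hw, mul_pow]
    have hfactor : v ^ (r + j + 1) * d⁄dX A w * w ^ r = X ^ r * (v ^ (j + 1) * d⁄dX A w) := by
      rw [hwr]
      linear_combination (X ^ r * v ^ (j + 1) * d⁄dX A w) * huv_pow r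
    rw [hfactor, coeff_X_pow_mul', if_pos hr, Nat.add_sub_cancel_left, hw,
      coeff_inv_pow_mul_derivative_X_mul huv]
    simp
  rw [hH, mul_comm, coeff_mul_subst hw0,
    Finset.sum_congr rfl fun r hr => by rw [hterm r (Nat.lt_succ_iff.1 (Finset.mem_range.1 hr))]]
  simp

end PowerSeries

/-- Let `φ` have constant term `1`, `w = zφ(w)`, and let
`C(z) = 1/(-z² d/dz (1/w))`, i.e. `C · z² · w' = w²`. Then
`C(z) = φ(w) - w φ'(w)`, and for all `k ≥ 2`,
`[z^{k-1}] C(z) = -(1/(k-1)) [y^{k-3}] φ''(y) φ(y)^{k-1}`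
(the right side written as `[y^{k-1}] (y² φ''(y) φ(y)^{k-1})` so that it
vanishes, as it should, when `k = 2`). -/
theorem c_series_formula {A : Type*} [CommRing A] [Algebra ℚ A]
    (φ w Cs : PowerSeries A)
    (hφ0 : PowerSeries.constantCoeff φ = 1)
    (hw0 : PowerSeries.constantCoeff w = 0)
    (hw : w = PowerSeries.X * pscomp φ w)
    (hC : Cs * PowerSeries.X ^ 2 * psderiv w = w ^ 2) :
    Cs = pscomp φ w - w * pscomp (psderiv φ) w ∧
      ∀ k, 2 ≤ k →
        PowerSeries.coeff (k - 1) Cs =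
          (-(1 / ((k : ℚ) - 1))) • PowerSeries.coeff (k - 1)
            (PowerSeries.X ^ 2 * psderiv (psderiv φ) * φ ^ (k - 1)) := by
  open PowerSeries in
  simp only [pscomp_eq_subst hw0, psderiv_eq_derivative] at hw hC ⊢
  have hφ : IsUnit (constantCoeff φ) := hφ0 ▸ isUnit_one
  have hsub : HasSubst w := .of_constantCoeff_zero' hw0
  have hCs := eq_subst_sub_mul_subst_derivative hφ hw hC
  refine ⟨hCs, fun k hk => ?_⟩
  obtain ⟨m, rfl⟩ : ∃ m, k = m + 2 := ⟨k - 2, by omega⟩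
  have hcoeff : ((m + 1 : ℕ) : A) * coeff (m + 1) Cs =
      -coeff (m + 1) (X ^ 2 * d⁄dX A (d⁄dX A φ) * φ ^ (m + 1)) := by
    calc ((m + 1 : ℕ) : A) * coeff (m + 1) Cs = coeff m (d⁄dX A Cs) := by
          rw [coeff_derivative, mul_comm]; push_cast; ring
      _ = -coeff m ((X * d⁄dX A (d⁄dX A φ)).subst w * d⁄dX A w) := by
          rw [hCs, derivative_subst_sub_mul_subst_derivative hsub, subst_mul hsub, subst_X hsub,
            map_neg]
      _ = -coeff (m + 1) (X ^ 2 * d⁄dX A (d⁄dX A φ) * φ ^ (m + 1)) := by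
          rw [coeff_subst_mul_derivative hφ hw, ← coeff_succ_X_mul]
          ring_nf
  rw [show m + 2 - 1 = m + 1 from rfl,
    show ((m + 2 : ℕ) : ℚ) - 1 = ((m + 1 : ℕ) : ℚ) by push_cast; ring,
    eq_one_div_smul_of_natCast_mul_eq m.succ_ne_zero hcoeff, smul_neg, neg_smul]
end
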